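/- arXiv:1404.6124 — 2 statements merged into one kernel-verified Lean document; each statement's English description precedes it below -/
import Mathlib

section
/- Let τ be a Borel probability measure on ℝ² invariant with respect to (π/2)-rotations and let φ₀ be the characteristic function of a Borel probability measure on ℝ. Define recursively, for bounded measurable ψ : ℝ → ℂ, the functions q̂₁(ξ; ψ) := ψ(ξ) and, for n ≥ 2, q̂ₙ(ξ; ψ) := (n−1)⁻¹ Σ_{j=1}^{n−1} ∫_{ℝ²} q̂ⱼ(lξ; ψ) q̂_{n−j}(rξ; ψ) τ(dl dr). Then for every n ≥ 2 and every ξ ∈ ℝ one has q̂ₙ(ξ; φ₀) = q̂ₙ(ξ; Re φ₀), where Re φ₀ denotes the (complex-valued) function ξ ↦ Re(φ₀(ξ)). -/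
/-!
Write `B(f, g)(ξ) = ∫ f(lξ) g(rξ) τ(dl dr)`. Rotation invariance gives `B(f, g) = B(g, f(-·))`;
applied twice, `B(f, g) = B(f(-·), g(-·))`, so every `B(f, g)` is even, and for even parts
`B(fᵉ, gᵉ) = (B(f, g) + B(g, f)) / 2`. The Wild sum is symmetric under `j ↦ n - j`, so by induction
`q̂ₙ(·; ψᵉ) = q̂ₙ(·; ψ)ᵉ`, which is `q̂ₙ(·; ψ)` itself for `n ≥ 2`. Finally, a characteristic function
satisfies `φ₀(-ξ) = conj φ₀(ξ)`, so `Re φ₀` is the even part of `φ₀`.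
-/

open MeasureTheory Filter Set

noncomputable section

/-- Characteristic function of a measure on `ℝ`. -/
def charFn (μ : Measure ℝ) (ξ : ℝ) : ℂ :=
  ∫ v, Complex.exp (Complex.I * ((ξ * v : ℝ) : ℂ)) ∂μ

/-- `τ` is invariant with respect to `(π/2)`-rotations. -/
def RotationInvariant (τ : Measure (ℝ × ℝ)) : Prop :=
  Measure.map (fun q : ℝ × ℝ => (-q.2, q.1)) τ = τ

/-- The Wild convolution iterates `q̂ₙ(ξ; ψ)`. -/
noncomputable def qhat (τ : Measure (ℝ × ℝ)) (ψ : ℝ → ℂ) : ℕ → ℝ → ℂ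
  | 0 => fun _ => 0
  | 1 => ψ
  | n + 2 => fun ξ =>
      ((n + 1 : ℕ) : ℂ)⁻¹ *
        ∑ j ∈ (Finset.Icc 1 (n + 1)).attach,
          ∫ q : ℝ × ℝ, qhat τ ψ j.1 (q.1 * ξ) * qhat τ ψ (n + 2 - j.1) (q.2 * ξ) ∂τ
  termination_by n => n
  decreasing_by
  all_goals
    have h := Finset.mem_Icc.mp j.2
    omega

def evenPart {α : Type*} [Neg α] (f : α → ℂ) : α → ℂ := fun x => (f x + f (-x)) / 2

lemma evenPart_of_even {α : Type*} [Neg α] {f : α → ℂ} (hf : f.Even) : evenPart f = f := by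
  funext x
  simp only [evenPart, hf x, add_self_div_two]

lemma ofReal_re_charFun {E : Type*} [MeasurableSpace E] [SeminormedAddCommGroup E]
    [InnerProductSpace ℝ E] (μ : Measure E) :
    (fun t => ((charFun μ t).re : ℂ)) = evenPart (charFun μ) := by
  funext t
  rw [evenPart, charFun_neg, Complex.add_conj]
  push_cast
  ring

lemma charFn_eq_charFun (μ : Measure ℝ) : charFn μ = charFun μ := by
  funext ξ
  simp only [charFn, charFun_apply_real, Complex.ofReal_mul, mul_comm Complex.I]

lemma RotationInvariant.integral_comp_rotate {τ : Measure (ℝ × ℝ)} (hrot : RotationInvariant τ)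
    {E : Type*} [NormedAddCommGroup E] [NormedSpace ℝ E] (F : ℝ × ℝ → E) :
    ∫ q, F (-q.2, q.1) ∂τ = ∫ q, F q ∂τ := by
  let e : ℝ × ℝ ≃ᵐ ℝ × ℝ :=
    MeasurableEquiv.prodComm.trans ((MeasurableEquiv.neg ℝ).prodCongr (MeasurableEquiv.refl ℝ))
  have he : Measure.map e τ = τ := hrot
  conv_rhs => rw [← he]
  exact (integral_map_equiv e F).symm

def wildProd (τ : Measure (ℝ × ℝ)) (f g : ℝ → ℂ) (ξ : ℝ) : ℂ :=
  ∫ q, f (q.1 * ξ) * g (q.2 * ξ) ∂τ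

lemma qhat_add_two (τ : Measure (ℝ × ℝ)) (ψ : ℝ → ℂ) (n : ℕ) (ξ : ℝ) :
    qhat τ ψ (n + 2) ξ = ((n + 1 : ℕ) : ℂ)⁻¹ *
      ∑ j ∈ Finset.Icc 1 (n + 1), wildProd τ (qhat τ ψ j) (qhat τ ψ (n + 2 - j)) ξ := by
  rw [qhat.eq_3]
  exact congrArg _ (Finset.sum_attach _ fun j => wildProd τ (qhat τ ψ j) (qhat τ ψ (n + 2 - j)) ξ)

section wildProd

variable {τ : Measure (ℝ × ℝ)} {f g : ℝ → ℂ}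

lemma measurable_wildProd [SFinite τ] (hf : Measurable f) (hg : Measurable g) :
    Measurable (wildProd τ f g) := by
  have : StronglyMeasurable fun p : ℝ × (ℝ × ℝ) => f (p.2.1 * p.1) * g (p.2.2 * p.1) := by
    apply Measurable.stronglyMeasurable
    fun_prop
  exact this.integral_prod_right'.measurable

lemma norm_wildProd_le_one [IsProbabilityMeasure τ] (hf : ∀ x, ‖f x‖ ≤ 1) (hg : ∀ x, ‖g x‖ ≤ 1)
    (ξ : ℝ) : ‖wildProd τ f g ξ‖ ≤ 1 := by
  refine (norm_integral_le_of_norm_le_const (C := 1) (ae_of_all _ fun q => ?_)).trans_eq (by simp)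
  rw [norm_mul]
  exact mul_le_one₀ (hf _) (norm_nonneg _) (hg _)

lemma integrable_wildProd_integrand [IsFiniteMeasure τ] (hf : Measurable f) (hg : Measurable g)
    {Cf Cg : ℝ} (hfC : ∀ x, ‖f x‖ ≤ Cf) (hgC : ∀ x, ‖g x‖ ≤ Cg) (ξ : ℝ) :
    Integrable (fun q : ℝ × ℝ => f (q.1 * ξ) * g (q.2 * ξ)) τ := by
  refine Integrable.of_bound (by fun_prop) (Cf * Cg) (ae_of_all _ fun q => ?_)
  rw [norm_mul]
  exact mul_le_mul (hfC _) (hgC _) (norm_nonneg _) ((norm_nonneg _).trans (hfC 0))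

lemma RotationInvariant.wildProd_eq_swap_neg (hrot : RotationInvariant τ) (ξ : ℝ) :
    wildProd τ f g ξ = wildProd τ g (fun x => f (-x)) ξ := by
  rw [wildProd, ← hrot.integral_comp_rotate, wildProd]
  congr 1 with q
  rw [neg_mul, mul_comm]

lemma RotationInvariant.wildProd_neg_neg (hrot : RotationInvariant τ) (ξ : ℝ) :
    wildProd τ (fun x => f (-x)) (fun x => g (-x)) ξ = wildProd τ f g ξ := by
  rw [hrot.wildProd_eq_swap_neg, hrot.wildProd_eq_swap_neg (f := fun x => g (-x))]
  simp only [neg_neg]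

lemma RotationInvariant.even_wildProd (hrot : RotationInvariant τ) : (wildProd τ f g).Even := by
  intro ξ
  rw [← hrot.wildProd_neg_neg]
  simp only [wildProd, mul_neg, neg_neg]

lemma RotationInvariant.wildProd_evenPart [IsFiniteMeasure τ] (hrot : RotationInvariant τ)
    (hf : Measurable f) (hg : Measurable g) {Cf Cg : ℝ} (hfC : ∀ x, ‖f x‖ ≤ Cf)
    (hgC : ∀ x, ‖g x‖ ≤ Cg) (ξ : ℝ) :
    wildProd τ (evenPart f) (evenPart g) ξ = (wildProd τ f g ξ + wildProd τ g f ξ) / 2 := by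
  have hf' : Measurable fun x => f (-x) := hf.comp measurable_neg
  have hg' : Measurable fun x => g (-x) := hg.comp measurable_neg
  have h₁ := integrable_wildProd_integrand (τ := τ) hf hg hfC hgC ξ
  have h₂ := integrable_wildProd_integrand (τ := τ) hf hg' hfC (fun x => hgC (-x)) ξ
  have h₃ := integrable_wildProd_integrand (τ := τ) hf' hg (fun x => hfC (-x)) hgC ξ
  have h₄ :=
    integrable_wildProd_integrand (τ := τ) hf' hg' (fun x => hfC (-x)) (fun x => hgC (-x)) ξ
  have expand : wildProd τ (evenPart f) (evenPart g) ξ = (wildProd τ f g ξ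
      + wildProd τ f (fun x => g (-x)) ξ + wildProd τ (fun x => f (-x)) g ξ
      + wildProd τ (fun x => f (-x)) (fun x => g (-x)) ξ) / 4 := by
    simp only [wildProd]
    rw [← integral_add h₁ h₂, ← integral_add (h₁.fun_add h₂) h₃,
      ← integral_add ((h₁.fun_add h₂).fun_add h₃) h₄, ← integral_div]
    congr 1 with q
    simp only [evenPart]
    ring
  have hfg' : wildProd τ f (fun x => g (-x)) ξ = wildProd τ g f ξ := by
    rw [hrot.wildProd_eq_swap_neg, ← hrot.wildProd_neg_neg]
    simp only [neg_neg]
  have hf'g : wildProd τ (fun x => f (-x)) g ξ = wildProd τ g f ξ := by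
    rw [hrot.wildProd_eq_swap_neg]
    simp only [neg_neg]
  rw [expand, hfg', hf'g, hrot.wildProd_neg_neg]
  ring

end wildProd

section qhat

variable {τ : Measure (ℝ × ℝ)} {ψ : ℝ → ℂ}

lemma measurable_qhat [SFinite τ] (hψ : Measurable ψ) (n : ℕ) : Measurable (qhat τ ψ n) := by
  induction n using Nat.strong_induction_on with
  | _ n ih =>
    match n with
    | 0 => rw [qhat.eq_1]; exact measurable_const
    | 1 => rwa [qhat.eq_2]
    | m + 2 =>
      simp_rw [funext (qhat_add_two τ ψ m)]
      refine (Finset.measurable_sum _ fun j hj => ?_).const_mul _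
      have hj := Finset.mem_Icc.mp hj
      exact measurable_wildProd (ih j (by omega)) (ih (m + 2 - j) (by omega))

lemma norm_qhat_le_one [IsProbabilityMeasure τ] (hψ : ∀ x, ‖ψ x‖ ≤ 1) (n : ℕ) (ξ : ℝ) :
    ‖qhat τ ψ n ξ‖ ≤ 1 := by
  induction n using Nat.strong_induction_on generalizing ξ with
  | _ n ih =>
    match n with
    | 0 => simp [qhat.eq_1]
    | 1 => rw [qhat.eq_2]; exact hψ ξ
    | m + 2 =>
      have hterm : ∀ j ∈ Finset.Icc 1 (m + 1),
          ‖wildProd τ (qhat τ ψ j) (qhat τ ψ (m + 2 - j)) ξ‖ ≤ 1 := fun j hj => by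
        have hj := Finset.mem_Icc.mp hj
        exact norm_wildProd_le_one (ih j (by omega)) (ih (m + 2 - j) (by omega)) ξ
      calc ‖qhat τ ψ (m + 2) ξ‖
          ≤ ((m + 1 : ℕ) : ℝ)⁻¹ * ∑ _j ∈ Finset.Icc 1 (m + 1), (1 : ℝ) := by
            rw [qhat_add_two, norm_mul, norm_inv, Complex.norm_natCast]
            gcongr
            exact (norm_sum_le _ _).trans (Finset.sum_le_sum hterm)
        _ = 1 := by
            rw [Finset.sum_const, Nat.card_Icc, nsmul_eq_mul, mul_one, Nat.add_sub_cancel,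
              inv_mul_cancel₀ (by positivity)]

lemma RotationInvariant.even_qhat (hrot : RotationInvariant τ) {n : ℕ} (hn : 2 ≤ n) :
    (qhat τ ψ n).Even := by
  obtain ⟨m, rfl⟩ := Nat.exists_eq_add_of_le' hn
  intro ξ
  simp only [qhat_add_two, hrot.even_wildProd _]

lemma Finset.sum_Icc_reflect {M : Type*} [AddCommMonoid M] (F : ℕ → ℕ → M) (n : ℕ) :
    ∑ j ∈ Finset.Icc 1 (n + 1), F (n + 2 - j) j = ∑ j ∈ Finset.Icc 1 (n + 1), F j (n + 2 - j) := by
  refine Finset.sum_nbij' (fun j => n + 2 - j) (fun j => n + 2 - j) ?_ ?_ ?_ ?_ ?_ <;>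
    intro j hj <;> rw [Finset.mem_Icc] at hj
  · exact Finset.mem_Icc.mpr (by omega)
  · exact Finset.mem_Icc.mpr (by omega)
  · omega
  · omega
  · rw [show n + 2 - (n + 2 - j) = j by omega]

lemma RotationInvariant.qhat_evenPart [IsProbabilityMeasure τ] (hrot : RotationInvariant τ)
    (hψ : Measurable ψ) (hψ₁ : ∀ x, ‖ψ x‖ ≤ 1) (n : ℕ) :
    qhat τ (evenPart ψ) n = evenPart (qhat τ ψ n) := by
  induction n using Nat.strong_induction_on with
  | _ n ih =>
    match n with
    | 0 => funext ξ; simp [qhat.eq_1, evenPart]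
    | 1 => rw [qhat.eq_2, qhat.eq_2]
    | m + 2 =>
      rw [evenPart_of_even (hrot.even_qhat le_add_self)]
      funext ξ
      have hsym : ∀ j ∈ Finset.Icc 1 (m + 1),
          wildProd τ (qhat τ (evenPart ψ) j) (qhat τ (evenPart ψ) (m + 2 - j)) ξ
            = (wildProd τ (qhat τ ψ j) (qhat τ ψ (m + 2 - j)) ξ
              + wildProd τ (qhat τ ψ (m + 2 - j)) (qhat τ ψ j) ξ) / 2 := fun j hj => by
        have hj := Finset.mem_Icc.mp hj
        rw [ih j (by omega), ih (m + 2 - j) (by omega)]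
        exact hrot.wildProd_evenPart (measurable_qhat hψ _) (measurable_qhat hψ _)
          (norm_qhat_le_one hψ₁ _) (norm_qhat_le_one hψ₁ _) ξ
      rw [qhat_add_two, qhat_add_two, Finset.sum_congr rfl hsym, ← Finset.sum_div,
        Finset.sum_add_distrib, Finset.sum_Icc_reflect
          (fun i j => wildProd τ (qhat τ ψ i) (qhat τ ψ j) ξ), add_self_div_two]

end qhat

/-- if `τ` is `(π/2)`-rotation invariant and `φ₀` is the characteristic
function of a probability measure on `ℝ`, then for all `n ≥ 2` the Wild iterates of
`φ₀` and of its real part coincide. -/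
theorem stmt17 (τ : Measure (ℝ × ℝ)) [IsProbabilityMeasure τ]
    (hrot : RotationInvariant τ)
    (μ₀ : Measure ℝ) [IsProbabilityMeasure μ₀]
    (φ₀ : ℝ → ℂ) (hφ₀ : φ₀ = charFn μ₀) :
    ∀ n : ℕ, 2 ≤ n → ∀ ξ : ℝ,
      qhat τ φ₀ n ξ = qhat τ (fun ζ => ((φ₀ ζ).re : ℂ)) n ξ := by
  intro n hn ξ
  rw [charFn_eq_charFun] at hφ₀
  subst hφ₀
  rw [ofReal_re_charFun, hrot.qhat_evenPart measurable_charFun norm_charFun_le_one,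
    evenPart_of_even (hrot.even_qhat hn)]
end
end

section
/- Let α > 0 and let c, x be real numbers with c ≥ 1 and x > c. Set N := ⌈(x/c)^α⌉ (so N ≥ 2). Then there exist real numbers L₁, …, L_{N−1} and R₁, …, R_{N−1} in (0,1) with L_k^α + R_k^α = 1 for every k = 1, …, N−1, such that, defining β₁ := c⁻¹ ∏_{j=1}^{N−1} L_j and β_k := c⁻¹ R_{N−k+1} ∏_{j=1}^{N−k} L_j for k = 2, …, N, one has: (a) β_k = 1/x for every k = 2, …, N; (b) 0 < β₁ ≤ 1/x, with β₁ = (x^α − (N−1)c^α)^{1/α}/(c x); and (c) Σ_{k=1}^{N} β_k^α = c^{−α}. -/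
open Filter Set

/-- splitting a weight `1/c` along a binary McKean cascade with edge
weights on the curve `l^α + r^α = 1` so that all leaves but one have weight `1/x`. -/
theorem stmt19 (α c x : ℝ) (hα : 0 < α) (hc : 1 ≤ c) (hx : c < x)
    (N : ℕ) (hN : N = ⌈(x / c) ^ α⌉₊) :
    2 ≤ N ∧
    ∃ L R : ℕ → ℝ,
      (∀ k ∈ Finset.Icc 1 (N - 1),
        L k ∈ Set.Ioo (0 : ℝ) 1 ∧ R k ∈ Set.Ioo (0 : ℝ) 1 ∧ L k ^ α + R k ^ α = 1) ∧
      ∃ β : ℕ → ℝ,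
        β 1 = c⁻¹ * ∏ j ∈ Finset.Icc 1 (N - 1), L j ∧
        (∀ k ∈ Finset.Icc 2 N,
          β k = c⁻¹ * R (N - k + 1) * ∏ j ∈ Finset.Icc 1 (N - k), L j) ∧
        (∀ k ∈ Finset.Icc 2 N, β k = 1 / x) ∧
        (0 < β 1 ∧ β 1 ≤ 1 / x) ∧
        β 1 = (x ^ α - ((N : ℝ) - 1) * c ^ α) ^ (1 / α) / (c * x) ∧
        (∑ k ∈ Finset.Icc 1 N, β k ^ α) = c ^ (-α) := by
  have hc0 : (0:ℝ) < c := lt_of_lt_of_le one_pos hc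
  have hx0 : (0:ℝ) < x := hc0.trans hx
  have hcα : (0:ℝ) < c ^ α := Real.rpow_pos_of_pos hc0 α
  have hxα : (0:ℝ) < x ^ α := Real.rpow_pos_of_pos hx0 α
  have hxnα : (0:ℝ) < x ^ (-α) := Real.rpow_pos_of_pos hx0 _
  set u : ℝ := (x / c) ^ α with hu
  have hu1 : 1 < u := by
    rw [hu]
    exact (Real.one_lt_rpow_iff_of_pos (by positivity)).mpr
      (Or.inl ⟨(one_lt_div hc0).mpr hx, hα⟩)
  have hN2 : 2 ≤ N := by
    rw [hN]
    have : 1 < ⌈u⌉₊ := Nat.lt_ceil.mpr (by exact_mod_cast hu1)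
    omega
  have hN1u : ((N:ℝ) - 1) < u := by
    have h1 : (N - 1 : ℕ) < ⌈u⌉₊ := by omega
    have h2 := Nat.lt_ceil.mp h1
    rwa [Nat.cast_sub (by omega), Nat.cast_one] at h2
  have huN : u ≤ (N:ℝ) := hN ▸ Nat.le_ceil u
  -- key identity
  have hcu : c ^ (-α) = u * x ^ (-α) := by
    rw [hu, Real.div_rpow hx0.le hc0.le, Real.rpow_neg hx0.le, Real.rpow_neg hc0.le]
    field_simp
  set A : ℕ → ℝ := fun k => c ^ (-α) - (k:ℝ) * x ^ (-α) with hA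
  have hAeq : ∀ k : ℕ, A k = (u - (k:ℝ)) * x ^ (-α) := by
    intro k; rw [hA]; dsimp only; rw [hcu]; ring
  have hApos : ∀ k : ℕ, (k:ℝ) < u → 0 < A k := by
    intro k hk; rw [hAeq]; exact mul_pos (by linarith) hxnα
  set w : ℕ → ℝ := fun k => (A k) ^ (1/α) with hw
  have hwpos : ∀ k : ℕ, (k:ℝ) < u → 0 < w k :=
    fun k hk => Real.rpow_pos_of_pos (hApos k hk) _
  have hwα : ∀ k : ℕ, (k:ℝ) < u → (w k) ^ α = A k := by
    intro k hk
    rw [hw]; dsimp only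
    rw [← Real.rpow_mul (hApos k hk).le, one_div_mul_cancel hα.ne', Real.rpow_one]
  have hkN : ∀ k : ℕ, k ≤ N - 1 → (k:ℝ) < u := by
    intro k hk
    have h2 : (k:ℝ) ≤ ((N-1:ℕ):ℝ) := by exact_mod_cast hk
    rw [Nat.cast_sub (by omega), Nat.cast_one] at h2
    linarith
  have hw0 : w 0 = c⁻¹ := by
    rw [hw, hA]; dsimp only
    rw [Nat.cast_zero, zero_mul, sub_zero, ← Real.rpow_mul hc0.le, neg_mul,
      mul_one_div, div_self hα.ne', Real.rpow_neg_one]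
  have hxinv : (x ^ (-α)) ^ (1/α) = x⁻¹ := by
    rw [← Real.rpow_mul hx0.le, neg_mul, mul_one_div, div_self hα.ne', Real.rpow_neg_one]
  set L : ℕ → ℝ := fun k => w k / w (k-1) with hL
  set R : ℕ → ℝ := fun k => 1 / (x * w (k-1)) with hR
  -- product telescope
  have hprod : ∀ m : ℕ, m ≤ N - 1 → ∏ j ∈ Finset.Icc 1 m, L j = c * w m := by
    intro m
    induction m with
    | zero => intro _; simp [hw0, mul_inv_cancel₀ hc0.ne']
    | succ m ih =>
      intro hm
      rw [Finset.prod_Icc_succ_top (Nat.le_add_left 1 m), ih (by omega)]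
      have hwm := hwpos m (hkN m (by omega))
      show c * w m * (w (m+1) / w ((m+1)-1)) = c * w (m+1)
      simp only [Nat.add_sub_cancel]
      field_simp
  refine ⟨hN2, L, R, ?_, (fun k => if k = 1 then w (N-1) else 1/x), ?_, ?_, ?_, ?_, ?_, ?_⟩
  · -- edge weight properties
    intro k hk
    rw [Finset.mem_Icc] at hk
    obtain ⟨hk1, hk2⟩ := hk
    have hku : (k:ℝ) < u := hkN k hk2
    have hk1u : ((k-1:ℕ):ℝ) < u := hkN (k-1) (by omega)
    have hwk := hwpos k hku
    have hwk1 := hwpos (k-1) hk1u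
    have hcast : ((k-1:ℕ):ℝ) = (k:ℝ) - 1 := by
      rw [Nat.cast_sub (by omega), Nat.cast_one]
    have hAlt : A k < A (k-1) := by
      rw [hAeq, hAeq, hcast]
      have : (k:ℝ) - 1 < (k:ℝ) := by linarith
      nlinarith [hxnα]
    constructor
    · exact ⟨div_pos hwk hwk1, (div_lt_one hwk1).mpr
        (Real.rpow_lt_rpow (hApos k hku).le hAlt (by positivity))⟩
    constructor
    · -- R k ∈ Ioo 0 1
      constructor
      · positivity
      · rw [hR]; dsimp only
        rw [div_lt_one (by positivity)]
        -- show 1 < x * w (k-1) i.e. x⁻¹ < w (k-1)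
        have hAgt : x ^ (-α) < A (k-1) := by
          rw [hAeq, hcast]
          nlinarith [mul_pos (sub_pos.mpr hku) hxnα]
        have := Real.rpow_lt_rpow hxnα.le hAgt (by positivity : (0:ℝ) < 1/α)
        rw [hxinv] at this
        calc (1:ℝ) = x * x⁻¹ := (mul_inv_cancel₀ hx0.ne').symm
          _ < x * w (k-1) := by
              exact (mul_lt_mul_iff_right₀ hx0).mpr this
    · -- L k ^ α + R k ^ α = 1
      rw [hL, hR]; dsimp only
      rw [Real.div_rpow hwk.le hwk1.le, Real.div_rpow (by norm_num) (by positivity),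
        Real.one_rpow, Real.mul_rpow hx0.le hwk1.le, hwα k hku, hwα (k-1) hk1u]
      have hstep : A k = A (k-1) - (x^α)⁻¹ := by
        rw [hA]; dsimp only
        rw [Real.rpow_neg hx0.le, hcast]; ring
      have hA1 := hApos (k-1) hk1u
      rw [hstep]
      field_simp
      ring
  · -- β 1 formula
    show w (N-1) = c⁻¹ * ∏ j ∈ Finset.Icc 1 (N - 1), L j
    rw [hprod (N-1) le_rfl, inv_mul_cancel_left₀ hc0.ne']
  · -- β k structural formula
    intro k hk
    rw [Finset.mem_Icc] at hk
    obtain ⟨hk2, hkN'⟩ := hk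
    have hk1 : k ≠ 1 := by omega
    simp only [if_neg hk1]
    have hm : N - k ≤ N - 1 := by omega
    rw [hprod (N-k) hm, hR]
    dsimp only
    have : N - k + 1 - 1 = N - k := by omega
    rw [this]
    have hwm := hwpos (N-k) (hkN (N-k) hm)
    field_simp
  · -- β k = 1/x
    intro k hk
    rw [Finset.mem_Icc] at hk
    have : k ≠ 1 := by omega
    simp [this]
  · -- bounds on β 1
    show 0 < w (N-1) ∧ w (N-1) ≤ 1 / x
    have hw1 := hwpos (N-1) (hkN (N-1) le_rfl)
    refine ⟨hw1, ?_⟩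
    have hcast : ((N-1:ℕ):ℝ) = (N:ℝ) - 1 := by
      rw [Nat.cast_sub (by omega), Nat.cast_one]
    have hAle : A (N-1) ≤ x ^ (-α) := by
      rw [hAeq, hcast]
      nlinarith [hxnα]
    have := Real.rpow_le_rpow (hApos (N-1) (hkN (N-1) le_rfl)).le hAle
      (by positivity : (0:ℝ) ≤ 1/α)
    rw [hxinv] at this
    rw [one_div]
    exact this
  · -- explicit formula for β 1
    show w (N-1) = (x ^ α - ((N : ℝ) - 1) * c ^ α) ^ (1 / α) / (c * x)
    have hcast : ((N-1:ℕ):ℝ) = (N:ℝ) - 1 := by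
      rw [Nat.cast_sub (by omega), Nat.cast_one]
    have hxu : x ^ α = u * c ^ α := by
      rw [hu, Real.div_rpow hx0.le hc0.le]
      field_simp
    have hnum : 0 ≤ x ^ α - ((N:ℝ) - 1) * c ^ α := by
      rw [hxu]; nlinarith [hcα]
    have hB : A (N-1) = (x ^ α - ((N:ℝ) - 1) * c ^ α) / (c*x) ^ α := by
      rw [Real.mul_rpow hc0.le hx0.le, hA]; dsimp only
      rw [Real.rpow_neg hx0.le, Real.rpow_neg hc0.le, hcast]
      field_simp
    rw [hw]; dsimp only
    rw [hB, Real.div_rpow hnum (by positivity), ← Real.rpow_mul (by positivity),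
      mul_one_div, div_self hα.ne', Real.rpow_one]
  · -- the sum
    have hins : Finset.Icc 1 N = insert 1 (Finset.Icc 2 N) := by
      ext j; simp only [Finset.mem_Icc, Finset.mem_insert]; omega
    rw [hins, Finset.sum_insert (by simp)]
    have h1 : (if (1:ℕ) = 1 then w (N-1) else 1/x) ^ α = A (N-1) := by
      simp only [if_pos rfl]
      exact hwα (N-1) (hkN (N-1) le_rfl)
    have h2 : ∑ k ∈ Finset.Icc 2 N, (if k = 1 then w (N-1) else 1/x) ^ α
        = ((N:ℝ) - 1) * x ^ (-α) := by
      have hcong : ∀ k ∈ Finset.Icc 2 N,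
          (if k = 1 then w (N-1) else 1/x) ^ α = (1/x) ^ α := by
        intro k hk
        rw [Finset.mem_Icc] at hk
        rw [if_neg (by omega : k ≠ 1)]
      rw [Finset.sum_congr rfl hcong, Finset.sum_const, Nat.card_Icc, nsmul_eq_mul]
      have : ((N + 1 - 2 : ℕ):ℝ) = (N:ℝ) - 1 := by
        rw [Nat.cast_sub (by omega)]; push_cast; ring
      rw [this, one_div, Real.inv_rpow hx0.le, ← Real.rpow_neg hx0.le]
    rw [h1, h2, hAeq]
    have hcast : ((N-1:ℕ):ℝ) = (N:ℝ) - 1 := by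
      rw [Nat.cast_sub (by omega), Nat.cast_one]
    rw [hcast, hcu]
    ring
end
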